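/- arXiv:2210.13739 — 5 statements merged into one kernel-verified Lean document; each statement's English description precedes it below -/
import Mathlib

section
/- For a vertex set X in graph G, the result of closing all vertices of X (in any order) equals the graph obtained from G by, for each connected component S of the induced subgraph G[X], adding all edges between pairs of vertices in N_G(S), and then deleting X. -/
variable {V : Type*} [Fintype V] [DecidableEq V]

/-- Closing a single vertex `v`: add a clique on `N_G(v)` and delete `v`
(the vertex is kept in the ambient type but made isolated). -/
def cl (G : SimpleGraph V) (v : V) : SimpleGraph V where
  Adj x y := x ≠ v ∧ y ≠ v ∧ x ≠ y ∧ (G.Adj x y ∨ (G.Adj v x ∧ G.Adj v y))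
  symm := by
    constructor
    rintro x y ⟨h1, h2, h3, h4⟩
    refine ⟨h2, h1, h3.symm, ?_⟩
    rcases h4 with h | h
    · exact Or.inl h.symm
    · exact Or.inr ⟨h.2, h.1⟩
  loopless := by constructor; rintro x ⟨_, _, h, _⟩; exact h rfl

set_option linter.unusedSectionVars false

lemma cl_liftWalk {G : SimpleGraph V} {v : V} {X' : Finset V} {s t : V} (p : (cl G v).Walk s t)
    (hp : ∀ w ∈ p.support, w ∈ X') :
    ∃ q : G.Walk s t, ∀ w ∈ q.support, w ∈ insert v X' := by
  induction p with
  | nil => exact ⟨.nil, by simpa using Finset.mem_insert_of_mem (hp _ (by simp))⟩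
  | @cons a b c h p ih =>
    obtain ⟨q, hq⟩ := ih (fun w hw => hp w (by simp [hw]))
    have ha : a ∈ insert v X' := Finset.mem_insert_of_mem (hp a (by simp))
    obtain ⟨h1, h2, h3, (h4 | ⟨h4, h5⟩)⟩ := h
    · refine ⟨.cons h4 q, ?_⟩
      intro w hw
      simp only [SimpleGraph.Walk.support_cons, List.mem_cons] at hw
      rcases hw with rfl | hw
      · exact ha
      · exact hq w hw
    · refine ⟨.cons h4.symm (.cons h5 q), ?_⟩
      intro w hw
      simp only [SimpleGraph.Walk.support_cons, List.mem_cons] at hw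
      rcases hw with rfl | rfl | hw
      · exact ha
      · exact Finset.mem_insert_self _ _
      · exact hq w hw

lemma cl_contractWalk {G : SimpleGraph V} {v : V} {X' : Finset V} (hv : v ∉ X') {s t : V}
    (p : G.Walk s t) (hp : ∀ w ∈ p.support, w ∈ insert v X') (ht : t ≠ v) :
    (s ≠ v → ∃ q : (cl G v).Walk s t, ∀ w ∈ q.support, w ∈ X') ∧
    (s = v → ∃ u ∈ X', G.Adj v u ∧ ∃ q : (cl G v).Walk u t, ∀ w ∈ q.support, w ∈ X') := by
  induction p with
  | nil =>
    refine ⟨fun hs => ⟨.nil, ?_⟩, fun hs => absurd hs ht⟩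
    intro w hw
    simp only [SimpleGraph.Walk.support_nil, List.mem_singleton] at hw
    subst hw
    exact (Finset.mem_insert.mp (hp w (by simp))).resolve_left hs
  | @cons a b c h p ih =>
    have hip : ∀ w ∈ p.support, w ∈ insert v X' := fun w hw => hp w (by simp [hw])
    have ihh := ih hip ht
    constructor
    · intro hs
      have ha : a ∈ X' := (Finset.mem_insert.mp (hp a (by simp))).resolve_left hs
      by_cases hb : b = v
      · subst hb
        obtain ⟨u, hu, hvu, q, hq⟩ := ihh.2 rfl
        by_cases hsu : a = u
        · subst hsu
          exact ⟨q, hq⟩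
        · refine ⟨.cons ⟨hs, fun h' => hv (h' ▸ hu), hsu, Or.inr ⟨h.symm, hvu⟩⟩ q, ?_⟩
          intro w hw
          replace hw : w = a ∨ w ∈ q.support := List.mem_cons.mp hw
          rcases hw with rfl | hw
          · exact ha
          · exact hq w hw
      · obtain ⟨q, hq⟩ := ihh.1 hb
        refine ⟨.cons ⟨hs, hb, h.ne, Or.inl h⟩ q, ?_⟩
        intro w hw
        replace hw : w = a ∨ w ∈ q.support := List.mem_cons.mp hw
        rcases hw with rfl | hw
        · exact ha
        · exact hq w hw
    · rintro rfl
      have hb : b ≠ a := fun h' => G.loopless.irrefl a (h' ▸ h)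
      obtain ⟨q, hq⟩ := ihh.1 hb
      exact ⟨b, (Finset.mem_insert.mp (hip b (by simp))).resolve_left hb, h, q, hq⟩

lemma cl_step {G : SimpleGraph V} {v : V} {X' : Finset V} (hv : v ∉ X') (x y : V) :
    (x ∉ X' ∧ y ∉ X' ∧ x ≠ y ∧
      ((cl G v).Adj x y ∨ ∃ s ∈ X', ∃ t ∈ X', (cl G v).Adj x s ∧ (cl G v).Adj y t ∧
        ∃ p : (cl G v).Walk s t, ∀ w ∈ p.support, w ∈ X')) ↔
    (x ∉ insert v X' ∧ y ∉ insert v X' ∧ x ≠ y ∧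
      (G.Adj x y ∨ ∃ s ∈ insert v X', ∃ t ∈ insert v X', G.Adj x s ∧ G.Adj y t ∧
        ∃ p : G.Walk s t, ∀ w ∈ p.support, w ∈ insert v X')) := by
  constructor
  · rintro ⟨hx, hy, hxy, (⟨hxv, hyv, -, (hadj | ⟨hvx, hvy⟩)⟩ | H)⟩
    · exact ⟨by simp [hx, hxv], by simp [hy, hyv], hxy, Or.inl hadj⟩
    · refine ⟨by simp [hx, hxv], by simp [hy, hyv], hxy, Or.inr
        ⟨v, Finset.mem_insert_self _ _, v, Finset.mem_insert_self _ _, hvx.symm, hvy.symm,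
          .nil, by simp⟩⟩
    · obtain ⟨s, hs, t, ht, hxs, hyt, p, hp⟩ := H
      obtain ⟨q, hq⟩ := cl_liftWalk p hp
      have hxv : x ≠ v := hxs.1
      have hyv : y ≠ v := hyt.1
      refine ⟨by simp [hx, hxv], by simp [hy, hyv], hxy, Or.inr ?_⟩
      obtain ⟨-, -, -, (hxs' | ⟨hvx, hvs⟩)⟩ := hxs
      · obtain ⟨-, -, -, (hyt' | ⟨hvy, hvt⟩)⟩ := hyt
        · exact ⟨s, Finset.mem_insert_of_mem hs, t, Finset.mem_insert_of_mem ht, hxs', hyt',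
            q, hq⟩
        · refine ⟨s, Finset.mem_insert_of_mem hs, v, Finset.mem_insert_self _ _, hxs', hvy.symm,
            q.concat hvt.symm, ?_⟩
          intro w hw
          simp only [SimpleGraph.Walk.support_concat, List.concat_eq_append,
            List.mem_append, List.mem_singleton] at hw
          rcases hw with hw | rfl
          · exact hq w hw
          · exact Finset.mem_insert_self _ _
      · obtain ⟨-, -, -, (hyt' | ⟨hvy, hvt⟩)⟩ := hyt
        · refine ⟨v, Finset.mem_insert_self _ _, t, Finset.mem_insert_of_mem ht, hvx.symm, hyt',
            .cons hvs q, ?_⟩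
          intro w hw
          simp only [SimpleGraph.Walk.support_cons, List.mem_cons] at hw
          rcases hw with rfl | hw
          · exact Finset.mem_insert_self _ _
          · exact hq w hw
        · exact ⟨v, Finset.mem_insert_self _ _, v, Finset.mem_insert_self _ _, hvx.symm, hvy.symm,
            .nil, by simp⟩
  · rintro ⟨hx, hy, hxy, (hadj | ⟨s, hs, t, ht, hxs, hyt, p, hp⟩)⟩
    · simp only [Finset.mem_insert, not_or] at hx hy
      exact ⟨hx.2, hy.2, hxy, Or.inl ⟨hx.1, hy.1, hxy, Or.inl hadj⟩⟩
    · simp only [Finset.mem_insert, not_or] at hx hy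
      obtain ⟨hxv, hx'⟩ := hx
      obtain ⟨hyv, hy'⟩ := hy
      refine ⟨hx', hy', hxy, ?_⟩
      by_cases hsv : s = v
      · subst hsv
        by_cases htv : t = s
        · exact Or.inl ⟨hxv, hyv, hxy, Or.inr ⟨hxs.symm, (htv ▸ hyt).symm⟩⟩
        · obtain ⟨u, hu, hvu, q, hq⟩ := (cl_contractWalk hv p hp htv).2 rfl
          refine Or.inr ⟨u, hu, t, (Finset.mem_insert.mp ht).resolve_left htv,
            ⟨hxv, fun h' => hv (h' ▸ hu), fun h' => hx' (h' ▸ hu), Or.inr ⟨hxs.symm, hvu⟩⟩,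
            ⟨hyv, htv, fun h' => hy' (h' ▸ (Finset.mem_insert.mp ht).resolve_left htv),
              Or.inl hyt⟩, q, hq⟩
      · by_cases htv : t = v
        · obtain rfl : v = t := htv.symm
          obtain ⟨u, hu, hvu, q, hq⟩ :=
            (cl_contractWalk hv p.reverse (by simpa using hp) hsv).2 rfl
          refine Or.inr ⟨s, (Finset.mem_insert.mp hs).resolve_left hsv, u, hu,
            ⟨hxv, hsv, fun h' => hx' (h' ▸ (Finset.mem_insert.mp hs).resolve_left hsv),
              Or.inl hxs⟩,
            ⟨hyv, fun h' => hv (h' ▸ hu), fun h' => hy' (h' ▸ hu), Or.inr ⟨hyt.symm, hvu⟩⟩,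
            q.reverse, by simpa using hq⟩
        · obtain ⟨q, hq⟩ := (cl_contractWalk hv p hp htv).1 hsv
          have hs' := (Finset.mem_insert.mp hs).resolve_left hsv
          have ht' := (Finset.mem_insert.mp ht).resolve_left htv
          exact Or.inr ⟨s, hs', t, ht',
            ⟨hxv, hsv, fun h' => hx' (h' ▸ hs'), Or.inl hxs⟩,
            ⟨hyv, htv, fun h' => hy' (h' ▸ ht'), Or.inl hyt⟩, q, hq⟩

/-- Closing all vertices of `X` (in any order, given by a duplicate-free list `l`
enumerating `X`) yields exactly the graph obtained from `G` by adding, for each connected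
component `S` of `G[X]`, all edges between pairs of vertices of `N_G(S)`, and deleting `X`:
two vertices `x, y ∉ X` are adjacent iff they were adjacent in `G`, or each is `G`-adjacent
to a vertex of `X` and those two vertices are connected within `G[X]`. -/
theorem foldl_cl_eq_componentwise (G : SimpleGraph V) (X : Finset V) (l : List V)
    (hnd : l.Nodup) (hl : l.toFinset = X) (x y : V) :
    (l.foldl cl G).Adj x y ↔
      x ∉ X ∧ y ∉ X ∧ x ≠ y ∧
        (G.Adj x y ∨ ∃ s ∈ X, ∃ t ∈ X, G.Adj x s ∧ G.Adj y t ∧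
          ∃ p : G.Walk s t, ∀ v ∈ p.support, v ∈ X) := by
  subst hl
  induction l generalizing G with
  | nil =>
    simp only [List.foldl_nil, List.toFinset_nil, Finset.notMem_empty, not_false_iff,
      true_and, false_and, exists_false, or_false]
    exact ⟨fun h => ⟨h.ne, h⟩, fun h => h.2⟩
  | cons v l' ih =>
    obtain ⟨hvl, hnd'⟩ := List.nodup_cons.mp hnd
    rw [List.foldl_cons, ih (cl G v) hnd', List.toFinset_cons]
    exact cl_step (by simpa using hvl) x y
end

section
/- Suppose κ_G(x,y) ≥ c for all x,y ∈ S, where (L,S,R) is a vertex cut of G with |R| ≥ |L| ≥ c and |S| ≥ c. If G has a vertex cut (L*,S*,R*) with |S*| < c, then S ∩ L* = ∅ or S ∩ R* = ∅, and not both sets are empty. -/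
variable {V : Type*} [Fintype V] [DecidableEq V]

/-- A vertex cut `(L,S,R)` of `G`. -/
def IsVertexCut (G : SimpleGraph V) (L S R : Finset V) : Prop :=
  Disjoint L S ∧ Disjoint L R ∧ Disjoint S R ∧ L ∪ S ∪ R = Finset.univ ∧
    L.Nonempty ∧ R.Nonempty ∧ ∀ x ∈ L, ∀ y ∈ R, ¬ G.Adj x y

/-- `S'` is an `(x,y)`-separator in `G`. -/
def IsSTSep (G : SimpleGraph V) (x y : V) (S' : Finset V) : Prop :=
  x ∉ S' ∧ y ∉ S' ∧ ∀ p : G.Walk x y, ∃ v ∈ p.support, v ∈ S'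

lemma walk_hits_mid (G : SimpleGraph V) (Lstar Sstar Rstar : Finset V)
    (h : IsVertexCut G Lstar Sstar Rstar) :
    ∀ {x y : V}, x ∈ Lstar → y ∈ Rstar → ∀ p : G.Walk x y,
      ∃ v ∈ p.support, v ∈ Sstar := by
  intro x y hx hy p
  induction p with
  | nil => exact absurd hy (Finset.disjoint_left.mp h.2.1 hx)
  | @cons a b c hadj q ih =>
    have hb : b ∈ Lstar ∪ Sstar ∪ Rstar := by
      rw [h.2.2.2.1]; exact Finset.mem_univ b
    rcases Finset.mem_union.mp hb with hb' | hbR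
    · rcases Finset.mem_union.mp hb' with hbL | hbS
      · obtain ⟨v, hv, hvS⟩ := ih hbL hy
        exact ⟨v, by simp [hv], hvS⟩
      · exact ⟨b, by simp, hbS⟩
    · exact absurd hadj (h.2.2.2.2.2.2 a hx b hbR)

/-- Let `(L,S,R)` be a vertex cut of `G` with `|R| ≥ |L| ≥ c` and `|S| ≥ c`, and suppose
`κ_G(x,y) ≥ c` for all `x, y ∈ S`. If `(L*,S*,R*)` is a vertex cut of `G` with `|S*| < c`,
then `S ∩ L* = ∅` or `S ∩ R* = ∅`, and they cannot both be empty. -/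
theorem middle_one_side (G : SimpleGraph V) (c : ℕ) (hc : 0 < c) (L S R : Finset V)
    (hcut : IsVertexCut G L S R) (hLR : L.card ≤ R.card) (hcL : c ≤ L.card)
    (hScard : c ≤ S.card)
    (hkappa : ∀ x ∈ S, ∀ y ∈ S, ∀ S' : Finset V, IsSTSep G x y S' → c ≤ S'.card)
    (Lstar Sstar Rstar : Finset V) (hcut' : IsVertexCut G Lstar Sstar Rstar)
    (hSstar : Sstar.card < c) :
    (S ∩ Lstar = ∅ ∨ S ∩ Rstar = ∅) ∧ ¬(S ∩ Lstar = ∅ ∧ S ∩ Rstar = ∅) := by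
  constructor
  · by_contra hb
    push_neg at hb
    obtain ⟨h1, h2⟩ := hb
    obtain ⟨x, hx⟩ := h1
    obtain ⟨y, hy⟩ := h2
    rw [Finset.mem_inter] at hx hy
    have hsep : IsSTSep G x y Sstar := by
      refine ⟨Finset.disjoint_left.mp hcut'.1 hx.2, ?_, ?_⟩
      · exact fun hyS => Finset.disjoint_left.mp hcut'.2.2.1 hyS hy.2
      · exact walk_hits_mid G Lstar Sstar Rstar hcut' hx.2 hy.2
    exact absurd (hkappa x hx.1 y hy.1 Sstar hsep) (not_le.mpr hSstar)
  · rintro ⟨h1, h2⟩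
    have hsub : S ⊆ Sstar := by
      intro s hs
      have hu : s ∈ Lstar ∪ Sstar ∪ Rstar := by
        rw [hcut'.2.2.2.1]; exact Finset.mem_univ s
      rcases Finset.mem_union.mp hu with hu' | hr
      · rcases Finset.mem_union.mp hu' with hl | hss
        · exact absurd (Finset.mem_inter.mpr ⟨hs, hl⟩) (by simp [h1])
        · exact hss
      · exact absurd (Finset.mem_inter.mpr ⟨hs, hr⟩) (by simp [h2])
    have := Finset.card_le_card hsub
    omega
end

section
/- Divide-and-conquer for vertex cuts: given a vertex cut (L,S,R) of G with |R| ≥ |L| ≥ c, the graph G is c-connected if and only if (1) κ_G(x,y) ≥ c for all x,y ∈ S, and (2) both the c-left graph G_L and the c-right graph G_R are c-connected. -/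
variable {V : Type*} [Fintype V] [DecidableEq V]

/-- A vertex cut `(L,S,R)` of a graph restricted to the vertex set `W`. -/
def IsVertexCutOn (G : SimpleGraph V) (W L S R : Finset V) : Prop :=
  Disjoint L S ∧ Disjoint L R ∧ Disjoint S R ∧ L ∪ S ∪ R = W ∧
    L.Nonempty ∧ R.Nonempty ∧ ∀ x ∈ L, ∀ y ∈ R, ¬ G.Adj x y

/-- A graph on vertex set `W` is `c`-connected: it has more than `c` vertices and no
vertex cut `(L',S',R')` with `|S'| < c`. -/
def IsCConnectedOn (G : SimpleGraph V) (W : Finset V) (c : ℕ) : Prop :=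
  c < W.card ∧ ∀ L S R : Finset V, IsVertexCutOn G W L S R → c ≤ S.card

/-- The graph on vertex set `W` obtained from `G` by keeping its edges inside `W`, adding a
clique on `K` joined completely to `S` (the `c`-left graph for `W = L ∪ S ∪ K_R`, the
`c`-right graph for `W = K_L ∪ S ∪ R`). -/
def sideGraph (G : SimpleGraph V) (S K W : Finset V) : SimpleGraph V where
  Adj x y := x ∈ W ∧ y ∈ W ∧ x ≠ y ∧
    (G.Adj x y ∨ (x ∈ K ∧ y ∈ K) ∨ (x ∈ S ∧ y ∈ K) ∨ (x ∈ K ∧ y ∈ S))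
  symm := by
    constructor
    rintro x y ⟨hx, hy, hxy, h⟩
    refine ⟨hy, hx, hxy.symm, ?_⟩
    rcases h with h | h | h | h
    · exact Or.inl h.symm
    · exact Or.inr (Or.inl ⟨h.2, h.1⟩)
    · exact Or.inr (Or.inr (Or.inr ⟨h.2, h.1⟩))
    · exact Or.inr (Or.inr (Or.inl ⟨h.2, h.1⟩))
  loopless := by constructor; rintro x ⟨_, _, h, _⟩; exact h rfl

set_option linter.unusedSectionVars false

lemma mem_tri {A B C : Finset V} {W : Finset V} (hU : A ∪ B ∪ C = W) {v : V} (hv : v ∈ W) :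
    v ∈ A ∨ v ∈ B ∨ v ∈ C := by
  have h : v ∈ A ∪ B ∪ C := hU.symm ▸ hv
  simpa [Finset.mem_union, or_assoc] using h

lemma cutOn_symm {G : SimpleGraph V} {W A B C : Finset V}
    (h : IsVertexCutOn G W A B C) : IsVertexCutOn G W C B A := by
  obtain ⟨h1, h2, h3, h4, h5, h6, h7⟩ := h
  refine ⟨h3.symm, h2.symm, h1.symm, ?_, h6, h5, fun x hx y hy hadj => h7 y hy x hx hadj.symm⟩
  rw [← h4]; ext v; simp only [Finset.mem_union]; tauto

lemma walk_hits {G : SimpleGraph V} {A B C W : Finset V}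
    (hAC : Disjoint A C) (hU : A ∪ B ∪ C = W) (hWuniv : W = Finset.univ)
    (hadj : ∀ x ∈ A, ∀ y ∈ C, ¬ G.Adj x y) :
    ∀ {x y : V} (p : G.Walk x y), x ∈ A → y ∈ C → ∃ v ∈ p.support, v ∈ B := by
  intro x y p
  induction p with
  | nil => exact fun hx hy => absurd hy (Finset.disjoint_left.mp hAC hx)
  | @cons u v w h q ih =>
    intro hu hw
    rcases mem_tri hU (hWuniv ▸ Finset.mem_univ v) with hv | hv | hv
    · obtain ⟨z, hz, hzB⟩ := ih hv hw
      exact ⟨z, by simp [SimpleGraph.Walk.support_cons]; tauto, hzB⟩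
    · exact ⟨v, by simp [SimpleGraph.Walk.support_cons, q.start_mem_support], hv⟩
    · exact absurd h (hadj u hu v hv)

lemma sep_of_cconn {G : SimpleGraph V} {c : ℕ} (hG : IsCConnectedOn G Finset.univ c)
    {x y : V} {S' : Finset V} (hsep : IsSTSep G x y S') : c ≤ S'.card := by
  classical
  obtain ⟨hx, hy, hwalk⟩ := hsep
  set A : Finset V := Finset.univ.filter (fun v => ∃ p : G.Walk x v, ∀ u ∈ p.support, u ∉ S')
    with hA
  have hmemA : ∀ v : V, v ∈ A ↔ ∃ p : G.Walk x v, ∀ u ∈ p.support, u ∉ S' := by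
    intro v; simp [hA]
  have hxA : x ∈ A := (hmemA x).mpr ⟨SimpleGraph.Walk.nil, by simp [hx]⟩
  have hyA : y ∉ A := by
    rw [hmemA]
    rintro ⟨p, hp⟩
    obtain ⟨v, hv, hvS⟩ := hwalk p
    exact hp v hv hvS
  have hAS : ∀ v ∈ A, v ∉ S' := by
    intro v hv
    obtain ⟨p, hp⟩ := (hmemA v).mp hv
    exact hp v p.end_mem_support
  refine hG.2 A S' (Finset.univ \ (A ∪ S'))
    ⟨Finset.disjoint_left.mpr hAS,
     Finset.disjoint_left.mpr (fun v hv h => (Finset.mem_sdiff.mp h).2 (Finset.mem_union_left _ hv)),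
     Finset.disjoint_left.mpr (fun v hv h => (Finset.mem_sdiff.mp h).2 (Finset.mem_union_right _ hv)),
     ?_, ⟨x, hxA⟩, ⟨y, Finset.mem_sdiff.mpr ⟨Finset.mem_univ y, by simp [hyA, hy]⟩⟩, ?_⟩
  · exact Finset.union_sdiff_of_subset (Finset.subset_univ _)
  · intro u hu v hv hadj
    obtain ⟨p, hp⟩ := (hmemA u).mp hu
    have hvS' : v ∉ S' := fun h => (Finset.mem_sdiff.mp hv).2 (Finset.mem_union_right _ h)
    have hvA : v ∈ A := by
      rw [hmemA]
      refine ⟨p.concat hadj, ?_⟩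
      intro w hw
      rw [SimpleGraph.Walk.support_concat, List.mem_append] at hw
      rcases hw with hw | hw
      · exact hp w hw
      · simp at hw; subst hw; exact hvS'
    exact (Finset.mem_sdiff.mp hv).2 (Finset.mem_union_left _ hvA)

lemma fwd_side_aux {G : SimpleGraph V} {c : ℕ}
    {P S Q K W : Finset V}
    (hPS : Disjoint P S) (hPQ : Disjoint P Q) (hSQ : Disjoint S Q)
    (huniv : P ∪ S ∪ Q = Finset.univ)
    (hadj : ∀ x ∈ P, ∀ y ∈ Q, ¬ G.Adj x y)
    (hK : K ⊆ Q)
    (hW : W = P ∪ S ∪ K)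
    (hG : IsCConnectedOn G Finset.univ c)
    {A B C : Finset V} (hcut : IsVertexCutOn (sideGraph G S K W) W A B C)
    (hB : B.card < c) {k : V} (hkK : k ∈ K) (hkC : k ∈ C) : False := by
  obtain ⟨dAB, dAC, dBC, hU, hAne, hCne, hE⟩ := hcut
  have hkW : k ∈ W := by rw [hW]; exact Finset.mem_union_right _ hkK
  have hkB : k ∉ B := Finset.disjoint_right.mp dBC hkC
  -- every vertex of (S ∪ K) \ B lies in C
  have hSKC : ∀ v, (v ∈ S ∨ v ∈ K) → v ∉ B → v ∈ C := by
    intro v hv hvB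
    have hvW : v ∈ W := by
      rw [hW]
      rcases hv with hv | hv
      · exact Finset.mem_union_left _ (Finset.mem_union_right _ hv)
      · exact Finset.mem_union_right _ hv
    rcases mem_tri hU hvW with hvA | hvB' | hvC
    · exfalso
      have hvk : v ≠ k := fun h => Finset.disjoint_left.mp dAC hvA (h ▸ hkC)
      have : (sideGraph G S K W).Adj v k := by
        refine ⟨hvW, hkW, hvk, ?_⟩
        rcases hv with hv | hv
        · exact Or.inr (Or.inr (Or.inl ⟨hv, hkK⟩))
        · exact Or.inr (Or.inl ⟨hv, hkK⟩)
      exact hE v hvA k hkC this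
    · exact absurd hvB' hvB
    · exact hvC
  have hAP : ∀ a ∈ A, a ∈ P := by
    intro a ha
    have haW : a ∈ W := by
      rw [← hU]
      exact Finset.mem_union_left _ (Finset.mem_union_left _ ha)
    have haB : a ∉ B := Finset.disjoint_left.mp dAB ha
    rw [hW] at haW
    rcases Finset.mem_union.mp haW with h | h
    · rcases Finset.mem_union.mp h with h | h
      · exact h
      · exact absurd (hSKC a (Or.inl h) haB) (Finset.disjoint_left.mp dAC ha)
    · exact absurd (hSKC a (Or.inr h) haB) (Finset.disjoint_left.mp dAC ha)
  have hle : c ≤ B.card := by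
    refine hG.2 A B (Finset.univ \ (A ∪ B))
      ⟨dAB,
       Finset.disjoint_left.mpr (fun v hv h => (Finset.mem_sdiff.mp h).2 (Finset.mem_union_left _ hv)),
       Finset.disjoint_left.mpr (fun v hv h => (Finset.mem_sdiff.mp h).2 (Finset.mem_union_right _ hv)),
       Finset.union_sdiff_of_subset (Finset.subset_univ _), hAne,
       ⟨k, Finset.mem_sdiff.mpr ⟨Finset.mem_univ k, by
          simp only [Finset.mem_union, not_or]
          exact ⟨Finset.disjoint_right.mp dAC hkC, hkB⟩⟩⟩, ?_⟩
    intro u hu v hv hGadj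
    have huP : u ∈ P := hAP u hu
    have hvAB : v ∉ A ∧ v ∉ B := by
      have := (Finset.mem_sdiff.mp hv).2
      simp only [Finset.mem_union, not_or] at this
      exact this
    rcases mem_tri huniv (Finset.mem_univ v) with hvP | hvS | hvQ
    · have hvW : v ∈ W := by rw [hW]; exact Finset.mem_union_left _ (Finset.mem_union_left _ hvP)
      have hvC : v ∈ C := by
        rcases mem_tri hU hvW with h | h | h
        · exact absurd h hvAB.1
        · exact absurd h hvAB.2
        · exact h
      exact hE u hu v hvC ⟨by rw [hW]; exact Finset.mem_union_left _ (Finset.mem_union_left _ huP),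
        hvW, hGadj.ne, Or.inl hGadj⟩
    · have hvW : v ∈ W := by rw [hW]; exact Finset.mem_union_left _ (Finset.mem_union_right _ hvS)
      have hvC : v ∈ C := by
        rcases mem_tri hU hvW with h | h | h
        · exact absurd h hvAB.1
        · exact absurd h hvAB.2
        · exact h
      exact hE u hu v hvC ⟨by rw [hW]; exact Finset.mem_union_left _ (Finset.mem_union_left _ huP),
        hvW, hGadj.ne, Or.inl hGadj⟩
    · exact hadj u huP v hvQ hGadj
  omega

lemma fwd_side {G : SimpleGraph V} {c : ℕ} (hc : 0 < c)
    {P S Q K W : Finset V}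
    (hPS : Disjoint P S) (hPQ : Disjoint P Q) (hSQ : Disjoint S Q)
    (huniv : P ∪ S ∪ Q = Finset.univ)
    (hadj : ∀ x ∈ P, ∀ y ∈ Q, ¬ G.Adj x y)
    (hK : K ⊆ Q) (hKc : K.card = c) (hcP : c ≤ P.card)
    (hW : W = P ∪ S ∪ K)
    (hG : IsCConnectedOn G Finset.univ c) :
    IsCConnectedOn (sideGraph G S K W) W c := by
  constructor
  · have hsub : P ∪ K ⊆ W := by
      rw [hW]
      intro v hv
      rcases Finset.mem_union.mp hv with h | h
      · exact Finset.mem_union_left _ (Finset.mem_union_left _ h)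
      · exact Finset.mem_union_right _ h
    have hdisj : Disjoint P K := hPQ.mono_right hK
    have hcard : (P ∪ K).card = P.card + K.card := Finset.card_union_of_disjoint hdisj
    have := Finset.card_le_card hsub
    omega
  · intro A B C hcut
    by_contra hB
    push_neg at hB
    have hKB : (K \ B).Nonempty := by
      rw [Finset.sdiff_nonempty]
      intro h
      have := Finset.card_le_card h
      omega
    obtain ⟨k, hk⟩ := hKB
    have hkK : k ∈ K := (Finset.mem_sdiff.mp hk).1
    have hkB : k ∉ B := (Finset.mem_sdiff.mp hk).2
    have hkW : k ∈ W := by rw [hW]; exact Finset.mem_union_right _ hkK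
    rcases mem_tri hcut.2.2.2.1 hkW with hkA | hkB' | hkC
    · exact fwd_side_aux hPS hPQ hSQ huniv hadj hK hW hG (cutOn_symm hcut) hB hkK hkA
    · exact absurd hkB' hkB
    · exact fwd_side_aux hPS hPQ hSQ huniv hadj hK hW hG hcut hB hkK hkC

lemma bwd_aux {G : SimpleGraph V} {c : ℕ}
    {L S R KR KL : Finset V}
    (hLS : Disjoint L S) (hLRd : Disjoint L R) (hSR : Disjoint S R)
    (huniv : L ∪ S ∪ R = Finset.univ)
    (hadj : ∀ x ∈ L, ∀ y ∈ R, ¬ G.Adj x y)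
    (hKR : KR ⊆ R) (hKRc : KR.card = c) (hKL : KL ⊆ L) (hKLc : KL.card = c)
    (hGL : IsCConnectedOn (sideGraph G S KR (L ∪ S ∪ KR)) (L ∪ S ∪ KR) c)
    (hGR : IsCConnectedOn (sideGraph G S KL (KL ∪ S ∪ R)) (KL ∪ S ∪ R) c)
    {A B C : Finset V} (hcut : IsVertexCutOn G Finset.univ A B C)
    (hB : B.card < c) (hCS : ∀ v ∈ C, v ∉ S) : False := by
  obtain ⟨dAB, dAC, dBC, hU, hAne, hCne, hE⟩ := hcut
  by_cases hCL : (C ∩ L).Nonempty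
  · -- build a cut in the left side graph
    set WL := L ∪ S ∪ KR with hWL
    have hsubL : C ∩ L ⊆ WL := fun v hv =>
      Finset.mem_union_left _ (Finset.mem_union_left _ (Finset.mem_inter.mp hv).2)
    have hsubB : B ∩ WL ⊆ WL := Finset.inter_subset_right
    have hle : c ≤ (B ∩ WL).card := by
      refine hGL.2 (C ∩ L) (B ∩ WL) (WL \ (C ∩ L ∪ B ∩ WL))
        ⟨Finset.disjoint_left.mpr (fun v hv h =>
            Finset.disjoint_left.mp dBC (Finset.mem_inter.mp h).1 (Finset.mem_inter.mp hv).1),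
         Finset.disjoint_left.mpr (fun v hv h =>
            (Finset.mem_sdiff.mp h).2 (Finset.mem_union_left _ hv)),
         Finset.disjoint_left.mpr (fun v hv h =>
            (Finset.mem_sdiff.mp h).2 (Finset.mem_union_right _ hv)),
         Finset.union_sdiff_of_subset (Finset.union_subset hsubL hsubB), hCL, ?_, ?_⟩
      · -- right side nonempty: contains KR \ B
        have hKRB : (KR \ B).Nonempty := by
          rw [Finset.sdiff_nonempty]
          intro h
          have := Finset.card_le_card h
          omega
        obtain ⟨k, hk⟩ := hKRB
        have hkK : k ∈ KR := (Finset.mem_sdiff.mp hk).1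
        have hkB : k ∉ B := (Finset.mem_sdiff.mp hk).2
        refine ⟨k, Finset.mem_sdiff.mpr ⟨Finset.mem_union_right _ hkK, ?_⟩⟩
        simp only [Finset.mem_union, Finset.mem_inter, not_or, not_and]
        exact ⟨fun _ hkL => Finset.disjoint_left.mp hLRd hkL (hKR hkK), fun hb _ => hkB hb⟩
      · -- no edges from C ∩ L across
        intro u hu v hv hadj'
        obtain ⟨huC, huL⟩ := Finset.mem_inter.mp hu
        obtain ⟨hvWL, hvn⟩ := Finset.mem_sdiff.mp hv
        simp only [Finset.mem_union, Finset.mem_inter, not_or, not_and] at hvn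
        have hvB : v ∉ B := fun h => hvn.2 h hvWL
        obtain ⟨-, -, hne, hor⟩ := hadj'
        have huS : u ∉ S := Finset.disjoint_left.mp hLS huL
        have huK : u ∉ KR := fun h => Finset.disjoint_left.mp hLRd huL (hKR h)
        have hGadj : G.Adj u v := by
          rcases hor with h | h | h | h
          · exact h
          · exact absurd h.1 huK
          · exact absurd h.1 huS
          · exact absurd h.1 huK
        rcases Finset.mem_union.mp hvWL with hvLS | hvKR
        · -- v ∈ L ∪ S : then v ∈ A, contradicting no A-C edges
          have hvC : v ∉ C := by
            intro hvC
            rcases Finset.mem_union.mp hvLS with h | h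
            · exact (hvn.1 hvC h).elim
            · exact hCS v hvC h
          have hvA : v ∈ A := by
            rcases mem_tri hU (Finset.mem_univ v) with h | h | h
            · exact h
            · exact absurd h hvB
            · exact absurd h hvC
          exact hE v hvA u huC hGadj.symm
        · exact hadj u huL v (hKR hvKR) hGadj
    have : (B ∩ WL).card ≤ B.card := Finset.card_le_card Finset.inter_subset_left
    omega
  · -- C ⊆ R : build a cut in the right side graph
    have hCR : ∀ v ∈ C, v ∈ R := by
      intro v hv
      rcases mem_tri huniv (Finset.mem_univ v) with h | h | h
      · exact absurd (Finset.mem_inter.mpr ⟨hv, h⟩) (fun hh => hCL ⟨v, hh⟩)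
      · exact absurd h (hCS v hv)
      · exact h
    set WR := KL ∪ S ∪ R with hWR
    have hsubC : C ⊆ WR := fun v hv => Finset.mem_union_right _ (hCR v hv)
    have hle : c ≤ (B ∩ WR).card := by
      refine hGR.2 C (B ∩ WR) (WR \ (C ∪ B ∩ WR))
        ⟨Finset.disjoint_left.mpr (fun v hv h =>
            Finset.disjoint_left.mp dBC (Finset.mem_inter.mp h).1 hv),
         Finset.disjoint_left.mpr (fun v hv h =>
            (Finset.mem_sdiff.mp h).2 (Finset.mem_union_left _ hv)),
         Finset.disjoint_left.mpr (fun v hv h =>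
            (Finset.mem_sdiff.mp h).2 (Finset.mem_union_right _ hv)),
         Finset.union_sdiff_of_subset (Finset.union_subset hsubC Finset.inter_subset_right),
         hCne, ?_, ?_⟩
      · have hKLB : (KL \ B).Nonempty := by
          rw [Finset.sdiff_nonempty]
          intro h
          have := Finset.card_le_card h
          omega
        obtain ⟨k, hk⟩ := hKLB
        have hkK : k ∈ KL := (Finset.mem_sdiff.mp hk).1
        have hkB : k ∉ B := (Finset.mem_sdiff.mp hk).2
        refine ⟨k, Finset.mem_sdiff.mpr
          ⟨Finset.mem_union_left _ (Finset.mem_union_left _ hkK), ?_⟩⟩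
        simp only [Finset.mem_union, Finset.mem_inter, not_or, not_and]
        exact ⟨fun hkC => Finset.disjoint_left.mp hLRd (hKL hkK) (hCR k hkC),
          fun hb _ => hkB hb⟩
      · intro u hu v hv hadj'
        have huR : u ∈ R := hCR u hu
        obtain ⟨hvWR, hvn⟩ := Finset.mem_sdiff.mp hv
        simp only [Finset.mem_union, Finset.mem_inter, not_or, not_and] at hvn
        have hvC : v ∉ C := hvn.1
        have hvB : v ∉ B := fun h => hvn.2 h hvWR
        obtain ⟨-, -, hne, hor⟩ := hadj'
        have huS : u ∉ S := fun h => Finset.disjoint_left.mp hSR h huR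
        have huK : u ∉ KL := fun h => Finset.disjoint_left.mp hLRd (hKL h) huR
        have hGadj : G.Adj u v := by
          rcases hor with h | h | h | h
          · exact h
          · exact absurd h.1 huK
          · exact absurd h.1 huS
          · exact absurd h.1 huK
        rcases Finset.mem_union.mp hvWR with hvKLS | hvR
        · rcases Finset.mem_union.mp hvKLS with h | h
          · exact hadj v (hKL h) u huR hGadj.symm
          · -- v ∈ S, so v ∈ A (v ∉ B, v ∉ C since C misses S)
            have hvA : v ∈ A := by
              rcases mem_tri hU (Finset.mem_univ v) with h' | h' | h'
              · exact h'
              · exact absurd h' hvB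
              · exact absurd h' hvC
            exact hE v hvA u hu hGadj.symm
        · have hvA : v ∈ A := by
            rcases mem_tri hU (Finset.mem_univ v) with h' | h' | h'
            · exact h'
            · exact absurd h' hvB
            · exact absurd h' hvC
          exact hE v hvA u hu hGadj.symm
    have : (B ∩ WR).card ≤ B.card := Finset.card_le_card Finset.inter_subset_left
    omega


/-- Divide-and-conquer for vertex cuts: given a vertex cut `(L,S,R)` of `G` with
`|R| ≥ |L| ≥ c`, the graph `G` is `c`-connected iff (1) `κ_G(x,y) ≥ c` for all `x,y ∈ S`,
and (2) both the `c`-left graph `G_L` and the `c`-right graph `G_R` are `c`-connected. -/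
theorem divide_and_conquer_vertexCut (G : SimpleGraph V) (c : ℕ) (hc : 0 < c)
    (L S R KR KL : Finset V)
    (hcut : IsVertexCutOn G Finset.univ L S R) (hLR : L.card ≤ R.card) (hcL : c ≤ L.card)
    (hKR : KR ⊆ R) (hKRcard : KR.card = c) (hKL : KL ⊆ L) (hKLcard : KL.card = c) :
    IsCConnectedOn G Finset.univ c ↔
      ((∀ x ∈ S, ∀ y ∈ S, ∀ S' : Finset V, IsSTSep G x y S' → c ≤ S'.card) ∧
        IsCConnectedOn (sideGraph G S KR (L ∪ S ∪ KR)) (L ∪ S ∪ KR) c ∧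
        IsCConnectedOn (sideGraph G S KL (KL ∪ S ∪ R)) (KL ∪ S ∪ R) c) := by
  obtain ⟨hLS, hLRd, hSR, huniv, hLne, hRne, hadj⟩ := hcut
  constructor
  · intro hG
    refine ⟨fun x _ y _ S' hsep => sep_of_cconn hG hsep, ?_, ?_⟩
    · exact fwd_side hc hLS hLRd hSR huniv hadj hKR hKRcard hcL rfl hG
    · refine fwd_side hc hSR.symm hLRd.symm hLS.symm ?_ (fun x hx y hy h => hadj y hy x hx h.symm)
        hKL hKLcard (hcL.trans hLR) ?_ hG
      · rw [← huniv]; ext v; simp only [Finset.mem_union]; tauto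
      · ext v; simp only [Finset.mem_union]; tauto
  · rintro ⟨h1, hGL, hGR⟩
    constructor
    · have hsub : L ∪ R ⊆ Finset.univ := Finset.subset_univ _
      have hcard : (L ∪ R).card = L.card + R.card := Finset.card_union_of_disjoint hLRd
      have := Finset.card_le_card hsub
      omega
    · intro A B C hcut'
      by_contra hB
      push_neg at hB
      by_cases hCS : ∀ v ∈ C, v ∉ S
      · exact (bwd_aux hLS hLRd hSR huniv hadj hKR hKRcard hKL hKLcard hGL hGR hcut' hB hCS).elim
      · by_cases hAS : ∀ v ∈ A, v ∉ S
        · exact (bwd_aux hLS hLRd hSR huniv hadj hKR hKRcard hKL hKLcard hGL hGR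
            (cutOn_symm hcut') hB hAS).elim
        · simp only [not_forall, not_not] at hCS hAS
          obtain ⟨y, hyC, hyS⟩ := hCS
          obtain ⟨x, hxA, hxS⟩ := hAS
          obtain ⟨dAB, dAC, dBC, hU, -, -, hE⟩ := hcut'
          have hsep : IsSTSep G x y B :=
            ⟨Finset.disjoint_left.mp dAB hxA, Finset.disjoint_right.mp dBC hyC,
             fun p => walk_hits dAC hU rfl hE p hxA hyC⟩
          exact absurd (h1 x hxS y hyS B hsep) (by omega)
end

section
/- Let G be a graph with terminal set T and let (L,S,R) be a Steiner cut of size at least c+1 that is minimum among Steiner cuts. Then every (A,B)-weak separator of size at most c with A,B ⊆ T must contain A or contain B (i.e., equal A or B restricted to being a weak separator); consequently T is a (T,c)-covering set. -/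
variable {V : Type*} [Fintype V] [DecidableEq V]

/-- A Steiner cut w.r.t. terminal set `T`. -/
def IsSteinerCut (G : SimpleGraph V) (T L S R : Finset V) : Prop :=
  IsVertexCut G L S R ∧ (L ∩ T).Nonempty ∧ (R ∩ T).Nonempty

/-- `S` is an `(A,B)`-weak separator in `G` (it may intersect `A` and `B`). -/
def IsWeakSeparator (G : SimpleGraph V) (A B S : Finset V) : Prop :=
  ∀ a ∈ A, ∀ b ∈ B, ∀ p : G.Walk a b, ∃ v ∈ p.support, v ∈ S

/-- `Z` is a `(T,c)`-covering set: for all `A, B ⊆ T` with `μ(A,B) ≤ c`, `Z` contains some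
minimum `(A,B)`-weak separator. -/
def IsCoveringSet (G : SimpleGraph V) (T Z : Finset V) (c : ℕ) : Prop :=
  ∀ A B : Finset V, A ⊆ T → B ⊆ T →
    (∃ S : Finset V, IsWeakSeparator G A B S ∧ S.card ≤ c) →
    ∃ S : Finset V, IsWeakSeparator G A B S ∧
      (∀ S' : Finset V, IsWeakSeparator G A B S' → S.card ≤ S'.card) ∧ S ⊆ Z

/-!
If a weak separator `S` of size at most `c` missed both a terminal `a ∈ A` and a terminal
`b ∈ B`, then the vertices reachable from `a` in `G - S` and the vertices outside them and `S`
would form a Steiner cut with separator `S`, contradicting that Steiner cuts have size `> c`.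
So every such separator contains `A` or `B`; as `A` and `B` are themselves weak separators,
the smaller of the two is a minimum one, and it lies inside `T`.
-/

open Finset

namespace SimpleGraph

variable {W : Type*} [Fintype W] (G : SimpleGraph W) (S : Finset W)

open Classical in
/-- The vertex set of the component of `a` in `G - S` (empty when `a ∈ S`). -/
noncomputable def avoidingReach (a : W) : Finset W :=
  {v | ∃ p : G.Walk a v, ∀ x ∈ p.support, x ∉ S}

variable {G S} {a b : W}

theorem mem_avoidingReach {v : W} :
    v ∈ G.avoidingReach S a ↔ ∃ p : G.Walk a v, ∀ x ∈ p.support, x ∉ S := by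
  simp [avoidingReach]

theorem self_mem_avoidingReach (ha : a ∉ S) : a ∈ G.avoidingReach S a :=
  mem_avoidingReach.2 ⟨.nil, by simpa using ha⟩

theorem disjoint_avoidingReach : Disjoint (G.avoidingReach S a) S :=
  Finset.disjoint_left.2 fun _ hv => by
    obtain ⟨p, hp⟩ := mem_avoidingReach.1 hv
    exact hp _ p.end_mem_support

theorem mem_avoidingReach_of_adj {x y : W} (hx : x ∈ G.avoidingReach S a) (hxy : G.Adj x y)
    (hy : y ∉ S) : y ∈ G.avoidingReach S a := by
  obtain ⟨p, hp⟩ := mem_avoidingReach.1 hx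
  refine mem_avoidingReach.2 ⟨p.concat hxy, fun z hz => ?_⟩
  simp only [Walk.support_concat, List.mem_append, List.mem_singleton] at hz
  rcases hz with hz | rfl
  exacts [hp z hz, hy]

theorem not_mem_avoidingReach (hsep : ∀ p : G.Walk a b, ∃ v ∈ p.support, v ∈ S) :
    b ∉ G.avoidingReach S a := fun hb => by
  obtain ⟨p, hp⟩ := mem_avoidingReach.1 hb
  obtain ⟨v, hv, hvS⟩ := hsep p
  exact hp v hv hvS

theorem isVertexCut_avoidingReach {G : SimpleGraph V} {S : Finset V} {a b : V} (ha : a ∉ S)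
    (hb : b ∉ S) (hsep : ∀ p : G.Walk a b, ∃ v ∈ p.support, v ∈ S) :
    IsVertexCut G (G.avoidingReach S a) S (univ \ (G.avoidingReach S a ∪ S)) := by
  refine ⟨disjoint_avoidingReach, disjoint_sdiff.mono_left subset_union_left,
    disjoint_sdiff.mono_left subset_union_right, union_sdiff_of_subset (subset_univ _),
    ⟨a, self_mem_avoidingReach ha⟩,
    ⟨b, by simpa [hb] using not_mem_avoidingReach hsep⟩, fun x hx y hy hxy => ?_⟩
  simp only [mem_sdiff, mem_univ, mem_union, not_or, true_and] at hy
  exact hy.1 (mem_avoidingReach_of_adj hx hxy hy.2)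

end SimpleGraph

theorem Finset.min_card_le_card_of_subset_or_subset {α : Type*} {A B S : Finset α}
    (h : A ⊆ S ∨ B ⊆ S) : min #A #B ≤ #S :=
  h.elim (fun hA => (min_le_left _ _).trans (card_le_card hA))
    fun hB => (min_le_right _ _).trans (card_le_card hB)

section WeakSeparator

variable {W : Type*} {G : SimpleGraph W} {T A B : Finset W} {c : ℕ}

theorem isWeakSeparator_left : IsWeakSeparator G A B A :=
  fun _ ha _ _ p => ⟨_, p.start_mem_support, ha⟩

theorem isWeakSeparator_right : IsWeakSeparator G A B B :=
  fun _ _ _ hb p => ⟨_, p.end_mem_support, hb⟩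

theorem isCoveringSet_self_of_subset_or_subset
    (h : ∀ A B : Finset W, A ⊆ T → B ⊆ T →
      ∀ S : Finset W, IsWeakSeparator G A B S → #S ≤ c → A ⊆ S ∨ B ⊆ S) :
    IsCoveringSet G T T c := by
  rintro A B hA hB ⟨S₀, hS₀, hS₀c⟩
  have hle : ∀ S, IsWeakSeparator G A B S → min #A #B ≤ #S := fun S hS => by
    by_cases hSc : #S ≤ c
    · exact min_card_le_card_of_subset_or_subset (h A B hA hB S hS hSc)
    · exact (min_card_le_card_of_subset_or_subset (h A B hA hB S₀ hS₀ hS₀c)).trans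
        (by omega)
  rcases min_choice #A #B with hmin | hmin
  · exact ⟨A, isWeakSeparator_left, fun S hS => hmin ▸ hle S hS, hA⟩
  · exact ⟨B, isWeakSeparator_right, fun S hS => hmin ▸ hle S hS, hB⟩

end WeakSeparator

section SteinerCut

variable {G : SimpleGraph V} {T A B S : Finset V} {c : ℕ}

theorem IsWeakSeparator.subset_or_subset
    (hmin : ∀ L S R : Finset V, IsSteinerCut G T L S R → c + 1 ≤ #S)
    (hA : A ⊆ T) (hB : B ⊆ T) (hsep : IsWeakSeparator G A B S) (hcard : #S ≤ c) :
    A ⊆ S ∨ B ⊆ S := by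
  by_contra! h
  obtain ⟨a, ha, haS⟩ := not_subset.1 h.1
  obtain ⟨b, hb, hbS⟩ := not_subset.1 h.2
  have hcut := G.isVertexCut_avoidingReach haS hbS (hsep a ha b hb)
  have hsteiner : IsSteinerCut G T (G.avoidingReach S a) S _ :=
    ⟨hcut, ⟨a, mem_inter.2 ⟨SimpleGraph.self_mem_avoidingReach haS, hA ha⟩⟩,
      ⟨b, mem_inter.2 ⟨by simp [hbS, SimpleGraph.not_mem_avoidingReach (hsep a ha b hb)],
        hB hb⟩⟩⟩
  have := hmin _ _ _ hsteiner
  omega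

end SteinerCut

theorem bigSteinerCut_terminals_cover_general (G : SimpleGraph V) (T : Finset V) (c : ℕ)
    (hmin : ∀ L S R : Finset V, IsSteinerCut G T L S R → c + 1 ≤ S.card) :
    (∀ A B : Finset V, A ⊆ T → B ⊆ T →
        ∀ S : Finset V, IsWeakSeparator G A B S → S.card ≤ c → A ⊆ S ∨ B ⊆ S) ∧
      IsCoveringSet G T T c :=
  have subset_or_subset := fun _ _ hA hB _ hsep hcard =>
    IsWeakSeparator.subset_or_subset hmin hA hB hsep hcard
  ⟨subset_or_subset, isCoveringSet_self_of_subset_or_subset subset_or_subset⟩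

/-- If every Steiner cut of `G` w.r.t. `T` has size at least `c+1`, then every
`(A,B)`-weak separator of size at most `c` with `A, B ⊆ T` contains `A` or contains `B`;
consequently `T` itself is a `(T,c)`-covering set. -/
theorem bigSteinerCut_terminals_cover (G : SimpleGraph V) (T : Finset V) (c : ℕ)
    (hc : 0 < c)
    (hmin : ∀ L S R : Finset V, IsSteinerCut G T L S R → c + 1 ≤ S.card) :
    (∀ A B : Finset V, A ⊆ T → B ⊆ T →
        ∀ S : Finset V, IsWeakSeparator G A B S → S.card ≤ c → A ⊆ S ∨ B ⊆ S) ∧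
      IsCoveringSet G T T c :=
  bigSteinerCut_terminals_cover_general G T c hmin
end

section
/- Let H = cl(G, X) be obtained from G by closing the vertex set X = V − (Z ∪ T), where Z is a (T,c)-covering set of G. Then for all A, B ⊆ T: min{c, μ_G(A,B)} = min{c, μ_H(A,B)}. -/
variable {V : Type*} [Fintype V] [DecidableEq V]

/-- The closure `cl(G,X)` of a vertex set `X`: close all vertices of `X`. Two vertices
`x, y ∉ X` are adjacent iff they are joined in `G` by a walk all of whose internal
vertices lie in `X`; the vertices of `X` become isolated (deleted). -/
def clSet (G : SimpleGraph V) (X : Finset V) : SimpleGraph V where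
  Adj x y := x ∉ X ∧ y ∉ X ∧ x ≠ y ∧
    ∃ p : G.Walk x y, ∀ v ∈ p.support, v = x ∨ v = y ∨ v ∈ X
  symm := by
    constructor
    rintro x y ⟨hx, hy, hxy, p, hp⟩
    refine ⟨hy, hx, hxy.symm, p.reverse, ?_⟩
    intro v hv
    rw [SimpleGraph.Walk.support_reverse, List.mem_reverse] at hv
    rcases hp v hv with h | h | h
    · exact Or.inr (Or.inl h)
    · exact Or.inl h
    · exact Or.inr (Or.inr h)
  loopless := by constructor; rintro x ⟨_, _, h, _⟩; exact h rfl

/-- `μ_G(A,B)`: the minimum cardinality of an `(A,B)`-weak separator. -/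
noncomputable def mu (G : SimpleGraph V) (A B : Finset V) : ℕ :=
  sInf {n | ∃ S : Finset V, IsWeakSeparator G A B S ∧ S.card = n}

open SimpleGraph in
lemma exists_clWalk_aux (G : SimpleGraph V) (X : Finset V) {a b : V} (hb : b ∉ X)
    (p : G.Walk a b) :
    ∃ u, u ∉ X ∧ ∃ (r : G.Walk a u) (q : (clSet G X).Walk u b),
      (∀ v ∈ r.support, v = a ∨ v = u ∨ v ∈ X) ∧
      (∀ v ∈ r.support, v ∈ p.support) ∧
      (∀ v ∈ q.support, v ∈ p.support) := by
  induction p with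
  | nil => exact ⟨_, hb, Walk.nil, Walk.nil, by simp, by simp, by simp⟩
  | @cons a w b h p' ih =>
    obtain ⟨u, hu, r, q, hr, hrs, hqs⟩ := ih hb
    by_cases hw : w ∈ X
    · refine ⟨u, hu, Walk.cons h r, q, ?_, ?_, ?_⟩
      · intro v hv
        rw [Walk.support_cons, List.mem_cons] at hv
        rcases hv with rfl | hv
        · exact Or.inl rfl
        · rcases hr v hv with rfl | rfl | hvX
          · exact Or.inr (Or.inr hw)
          · exact Or.inr (Or.inl rfl)
          · exact Or.inr (Or.inr hvX)
      · intro v hv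
        rw [Walk.support_cons, List.mem_cons] at hv ⊢
        rcases hv with rfl | hv
        · exact Or.inl rfl
        · exact Or.inr (hrs v hv)
      · intro v hv
        rw [Walk.support_cons, List.mem_cons]
        exact Or.inr (hqs v hv)
    · -- w ∉ X : start a fresh H-walk at w
      have hq' : ∃ q' : (clSet G X).Walk w b, ∀ v ∈ q'.support, v ∈ p'.support := by
        by_cases hwu : w = u
        · subst hwu
          exact ⟨q, hqs⟩
        · refine ⟨Walk.cons (show (clSet G X).Adj w u from ⟨hw, hu, hwu, r, hr⟩) q, ?_⟩
          intro v hv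
          rw [Walk.support_cons, List.mem_cons] at hv
          rcases hv with rfl | hv
          · exact Walk.start_mem_support _
          · exact hqs v hv
      obtain ⟨q', hq's⟩ := hq'
      refine ⟨w, hw, Walk.cons h Walk.nil, q', ?_, ?_, ?_⟩
      · intro v hv
        rw [Walk.support_cons, List.mem_cons] at hv
        rcases hv with rfl | hv
        · exact Or.inl rfl
        · simp only [Walk.support_nil, List.mem_singleton] at hv
          exact Or.inr (Or.inl hv)
      · intro v hv
        rw [Walk.support_cons, List.mem_cons] at hv ⊢
        rcases hv with rfl | hv
        · exact Or.inl rfl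
        · simp only [Walk.support_nil, List.mem_singleton] at hv
          subst hv
          exact Or.inr (Walk.start_mem_support _)
      · intro v hv
        rw [Walk.support_cons, List.mem_cons]
        exact Or.inr (hq's v hv)

open SimpleGraph in
lemma exists_clWalk (G : SimpleGraph V) (X : Finset V) {a b : V} (ha : a ∉ X) (hb : b ∉ X)
    (p : G.Walk a b) :
    ∃ q : (clSet G X).Walk a b, ∀ v ∈ q.support, v ∈ p.support := by
  obtain ⟨u, hu, r, q, hr, hrs, hqs⟩ := exists_clWalk_aux G X hb p
  by_cases hau : a = u
  · subst hau
    exact ⟨q, hqs⟩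
  · refine ⟨Walk.cons (show (clSet G X).Adj a u from ⟨ha, hu, hau, r, hr⟩) q, ?_⟩
    intro v hv
    rw [Walk.support_cons, List.mem_cons] at hv
    rcases hv with rfl | hv
    · exact Walk.start_mem_support _
    · exact hqs v hv

open SimpleGraph in
lemma exists_walk_of_clWalk (G : SimpleGraph V) (X : Finset V) {a b : V}
    (q : (clSet G X).Walk a b) :
    ∃ p : G.Walk a b, ∀ v ∈ p.support, v ∈ q.support ∨ v ∈ X := by
  induction q with
  | nil => exact ⟨Walk.nil, by simp⟩
  | @cons a w b h q' ih =>
    obtain ⟨-, -, -, r, hr⟩ := id h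
    obtain ⟨p', hp'⟩ := ih
    refine ⟨r.append p', ?_⟩
    intro v hv
    rw [Walk.support_append, List.mem_append] at hv
    rcases hv with hv | hv
    · rcases hr v hv with rfl | rfl | hvX
      · exact Or.inl (Walk.start_mem_support _)
      · refine Or.inl ?_
        rw [Walk.support_cons, List.mem_cons]
        exact Or.inr (Walk.start_mem_support _)
      · exact Or.inr hvX
    · rcases hp' v (List.mem_of_mem_tail hv) with hv' | hv'
      · refine Or.inl ?_
        rw [Walk.support_cons, List.mem_cons]
        exact Or.inr hv'
      · exact Or.inr hv'

lemma weakSep_univ (G : SimpleGraph V) (A B : Finset V) :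
    IsWeakSeparator G A B Finset.univ :=
  fun a _ _ _ p => ⟨a, p.start_mem_support, Finset.mem_univ a⟩

lemma mu_le_card (G : SimpleGraph V) {A B S : Finset V}
    (hS : IsWeakSeparator G A B S) : mu G A B ≤ S.card :=
  Nat.sInf_le ⟨S, hS, rfl⟩

lemma exists_min_sep (G : SimpleGraph V) (A B : Finset V) :
    ∃ S : Finset V, IsWeakSeparator G A B S ∧ S.card = mu G A B := by
  have h : {n | ∃ S : Finset V, IsWeakSeparator G A B S ∧ S.card = n}.Nonempty :=
    ⟨Finset.univ.card, Finset.univ, weakSep_univ G A B, rfl⟩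
  exact Nat.sInf_mem h

/-- Let `H = cl(G, X)` where `X = V − (Z ∪ T)` and `Z` is a `(T,c)`-covering set of `G`.
Then for all `A, B ⊆ T`: `min{c, μ_G(A,B)} = min{c, μ_H(A,B)}`. -/
theorem mu_closure_covering (G : SimpleGraph V) (T Z : Finset V) (c : ℕ) (hc : 0 < c)
    (hZ : IsCoveringSet G T Z c) (A B : Finset V) (hA : A ⊆ T) (hB : B ⊆ T) :
    min c (mu G A B) = min c (mu (clSet G (Finset.univ \ (Z ∪ T))) A B) := by
  set X : Finset V := Finset.univ \ (Z ∪ T) with hXdef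
  have hTnX : ∀ v ∈ T, v ∉ X := by
    intro v hv hvX
    rw [hXdef, Finset.mem_sdiff] at hvX
    exact hvX.2 (Finset.mem_union_right _ hv)
  have hZnX : ∀ v ∈ Z, v ∉ X := by
    intro v hv hvX
    rw [hXdef, Finset.mem_sdiff] at hvX
    exact hvX.2 (Finset.mem_union_left _ hv)
  -- every separator of the closure is a separator of G
  have hsepHG : ∀ S : Finset V, IsWeakSeparator (clSet G X) A B S →
      IsWeakSeparator G A B S := by
    intro S hS a ha b hb p
    obtain ⟨q, hq⟩ := exists_clWalk G X (hTnX a (hA ha)) (hTnX b (hB hb)) p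
    obtain ⟨v, hv, hvS⟩ := hS a ha b hb q
    exact ⟨v, hq v hv, hvS⟩
  have hmGH : mu G A B ≤ mu (clSet G X) A B := by
    obtain ⟨S, hS, hScard⟩ := exists_min_sep (clSet G X) A B
    exact hScard ▸ mu_le_card G (hsepHG S hS)
  by_cases hcm : mu G A B ≤ c
  · -- use the covering set to find a minimum separator inside Z
    obtain ⟨S0, hS0, hS0card⟩ := exists_min_sep G A B
    obtain ⟨S, hSsep, hSmin, hSZ⟩ := hZ A B hA hB ⟨S0, hS0, hS0card ▸ hcm⟩
    have hScard : S.card = mu G A B :=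
      le_antisymm (hS0card ▸ hSmin S0 hS0) (mu_le_card G hSsep)
    have hSsepH : IsWeakSeparator (clSet G X) A B S := by
      intro a ha b hb q
      obtain ⟨p, hp⟩ := exists_walk_of_clWalk G X q
      obtain ⟨v, hv, hvS⟩ := hSsep a ha b hb p
      rcases hp v hv with hv' | hv'
      · exact ⟨v, hv', hvS⟩
      · exact absurd hv' (hZnX v (hSZ hvS))
    have hmHG : mu (clSet G X) A B ≤ mu G A B :=
      hScard ▸ mu_le_card (clSet G X) hSsepH
    rw [le_antisymm hmGH hmHG]
  · omega
end
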